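/- arXiv:2207.14536 — 3 statements merged into one kernel-verified Lean document; each statement's English description precedes it below -/
import Mathlib

section
/- Let A and B be two d×d real positive definite matrices. Then A + B - 2(A # B) ⪯ (A - B) A⁻¹ (A - B), where A # B := A^{1/2} (A^{-1/2} B A^{-1/2})^{1/2} A^{1/2} is the matrix geometric mean and ⪯ denotes the Loewner (positive semidefinite) order. -/
open Matrix

/-- **Matrix geometric mean inequality.**
For positive definite `d × d` real matrices `A` and `B`,
`A + B - 2 (A # B) ⪯ (A - B) A⁻¹ (A - B)` in the Loewner order, where
`A # B = A^{1/2} (A^{-1/2} B A^{-1/2})^{1/2} A^{1/2}` is the matrix geometric mean.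
Here the square roots are encoded by matrices `SA` (the positive definite square root of `A`)
and `C` (the positive definite square root of `A^{-1/2} B A^{-1/2} = SA⁻¹ * B * SA⁻¹`). -/
theorem stmt0 {d : ℕ} (A B SA C : Matrix (Fin d) (Fin d) ℝ)
    (hA : A.PosDef) (hB : B.PosDef)
    (hSA : SA.PosDef) (hSA2 : SA * SA = A)
    (hC : C.PosDef) (hC2 : C * C = SA⁻¹ * B * SA⁻¹) :
    ((A - B) * A⁻¹ * (A - B) - (A + B - (2 : ℝ) • (SA * C * SA))).PosSemidef := by
  have hdet : IsUnit SA.det := isUnit_iff_ne_zero.mpr (ne_of_gt hSA.det_pos)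
  have hinv1 : SA * SA⁻¹ = 1 := Matrix.mul_nonsing_inv _ hdet
  have hinv2 : SA⁻¹ * SA = 1 := Matrix.nonsing_inv_mul _ hdet
  have hB' : B = SA * (C * C) * SA := by
    rw [hC2]
    refine Eq.symm ?_
    calc SA * (SA⁻¹ * B * SA⁻¹) * SA
        = (SA * SA⁻¹) * B * (SA⁻¹ * SA) := by noncomm_ring
      _ = B := by rw [hinv1, hinv2, Matrix.one_mul, Matrix.mul_one]
  have hAinv : A⁻¹ = SA⁻¹ * SA⁻¹ := by rw [← hSA2, Matrix.mul_inv_rev]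
  have h1 : A - B = SA * (1 - C * C) * SA := by
    rw [hB', ← hSA2]; noncomm_ring
  have h2 : (A - B) * A⁻¹ * (A - B) = SA * ((1 - C * C) * (1 - C * C)) * SA := by
    rw [h1, hAinv]
    calc SA * (1 - C * C) * SA * (SA⁻¹ * SA⁻¹) * (SA * (1 - C * C) * SA)
        = SA * (1 - C * C) * (SA * SA⁻¹) * (SA⁻¹ * SA) * ((1 - C * C) * SA) := by
          noncomm_ring
      _ = SA * ((1 - C * C) * (1 - C * C)) * SA := by
          rw [hinv1, hinv2, Matrix.mul_one, Matrix.mul_one]; noncomm_ring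
  have key : (A - B) * A⁻¹ * (A - B) - (A + B - (2 : ℝ) • (SA * C * SA))
      = SA * ((C - 1) * (C * C + C + C) * (C - 1)) * SA := by
    rw [h2, hB', ← hSA2]
    have h2s : (2 : ℝ) • (SA * C * SA) = SA * C * SA + SA * C * SA := by
      rw [two_smul]
    rw [h2s]; noncomm_ring
  rw [key]
  have hCs : Cᴴ = C := hC.isHermitian
  have hSAs : SAᴴ = SA := hSA.isHermitian
  have hM : (C * C + C + C).PosSemidef := by
    have : (Cᴴ * C).PosSemidef := posSemidef_conjTranspose_mul_self C
    rw [hCs] at this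
    exact (this.add hC.posSemidef).add hC.posSemidef
  have hmid : ((C - 1) * (C * C + C + C) * (C - 1)).PosSemidef := by
    have := hM.conjTranspose_mul_mul_same (C - 1)
    rwa [conjTranspose_sub, hCs, conjTranspose_one] at this
  have := hmid.conjTranspose_mul_mul_same SA
  rwa [hSAs] at this
end

section
/- For all z ≥ 0, φ(z)/(1 - Φ(z)) ≤ 2/(√(4+z²) - z) = (√(4+z²) + z)/2 ≤ 1 + z, where φ and Φ are the density and distribution function of the standard normal distribution. -/
/-!
Let `g x = (√(4 + x²) - x) / 2`, the positive root of `g² + x g = 1`, so that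
`2 / (√(4 + z²) - z) = 1 / g z`. Since `g' = -g / √(4 + x²)` and `φ' = -x φ`, the gap
`(1 - Φ) - φ g` has derivative `φ g (1 / √(4 + x²) - g)`, which is `≤ 0` because
`g √(4 + x²) ≥ 1` amounts to `x √(4 + x²) ≤ 2 + x²`. The gap is therefore antitone, and it tends
to `0` at `+∞`, hence it is nonnegative: `φ g ≤ 1 - Φ` on all of `ℝ`.
-/

open Real

noncomputable def stdNormalPDF (z : ℝ) : ℝ := (Real.sqrt (2 * π))⁻¹ * Real.exp (-z ^ 2 / 2)

noncomputable def stdNormalCDF (z : ℝ) : ℝ := ∫ u in Set.Iic z, stdNormalPDF u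

open MeasureTheory Filter Topology ProbabilityTheory

theorem hasDerivAt_integral_Iic {f : ℝ → ℝ} (hf : Continuous f) (hfi : Integrable f) (x : ℝ) :
    HasDerivAt (fun y ↦ ∫ u in Set.Iic y, f u) (f x) x := by
  have hsplit : (fun y ↦ ∫ u in Set.Iic y, f u) =
      fun y ↦ (∫ u in Set.Iic 0, f u) + ∫ u in (0 : ℝ)..y, f u := by
    funext y
    rw [← intervalIntegral.integral_Iic_sub_Iic hfi.integrableOn hfi.integrableOn]
    ring
  rw [hsplit]
  exact (intervalIntegral.integral_hasDerivAt_right hfi.intervalIntegrable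
    hf.stronglyMeasurable.stronglyMeasurableAtFilter hf.continuousAt).const_add _

theorem stdNormalPDF_eq_gaussianPDFReal : stdNormalPDF = gaussianPDFReal 0 1 := by
  ext z
  simp [stdNormalPDF, gaussianPDFReal]

theorem stdNormalPDF_pos (z : ℝ) : 0 < stdNormalPDF z := by
  rw [stdNormalPDF_eq_gaussianPDFReal]
  exact gaussianPDFReal_pos 0 1 z one_ne_zero

theorem hasDerivAt_stdNormalPDF (z : ℝ) : HasDerivAt stdNormalPDF (-z * stdNormalPDF z) z := by
  have h := (((hasDerivAt_pow 2 z).neg.div_const 2).exp).const_mul (√(2 * π))⁻¹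
  refine h.congr_deriv ?_
  simp only [stdNormalPDF, Pi.neg_apply]
  ring

theorem continuous_stdNormalPDF : Continuous stdNormalPDF := by
  unfold stdNormalPDF
  fun_prop

theorem integrable_stdNormalPDF : Integrable stdNormalPDF := by
  rw [stdNormalPDF_eq_gaussianPDFReal]
  exact integrable_gaussianPDFReal 0 1

theorem integral_stdNormalPDF : ∫ z, stdNormalPDF z = 1 := by
  rw [stdNormalPDF_eq_gaussianPDFReal]
  exact integral_gaussianPDFReal_eq_one 0 one_ne_zero

theorem hasDerivAt_stdNormalCDF (z : ℝ) : HasDerivAt stdNormalCDF (stdNormalPDF z) z :=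
  hasDerivAt_integral_Iic continuous_stdNormalPDF integrable_stdNormalPDF z

theorem tendsto_stdNormalCDF_atTop : Tendsto stdNormalCDF atTop (𝓝 1) := by
  have h := (aecover_Iic (μ := volume) tendsto_id).integral_tendsto_of_countably_generated
    integrable_stdNormalPDF
  rwa [integral_stdNormalPDF] at h

theorem tendsto_stdNormalPDF_atTop : Tendsto stdNormalPDF atTop (𝓝 0) := by
  have h : Tendsto (fun z : ℝ ↦ -z ^ 2 / 2) atTop atBot :=
    (tendsto_neg_atTop_atBot.comp (tendsto_pow_atTop two_ne_zero)).atBot_div_const two_pos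
  have h' := (tendsto_exp_atBot.comp h).const_mul (√(2 * π))⁻¹
  rwa [mul_zero] at h'

noncomputable def millsBound (x : ℝ) : ℝ := (√(4 + x ^ 2) - x) / 2

theorem lt_sqrt_four_add_sq (x : ℝ) : x < √(4 + x ^ 2) := by
  have := Real.sq_sqrt (show (0 : ℝ) ≤ 4 + x ^ 2 by positivity)
  nlinarith [Real.sqrt_nonneg (4 + x ^ 2)]

theorem millsBound_pos (x : ℝ) : 0 < millsBound x := by
  have := lt_sqrt_four_add_sq x
  unfold millsBound
  linarith

theorem millsBound_sq_add_mul (x : ℝ) : millsBound x ^ 2 + x * millsBound x = 1 := by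
  have := Real.sq_sqrt (show (0 : ℝ) ≤ 4 + x ^ 2 by positivity)
  unfold millsBound
  linear_combination this / 4

theorem millsBound_le_one {x : ℝ} (hx : 0 ≤ x) : millsBound x ≤ 1 := by
  nlinarith [millsBound_sq_add_mul x, millsBound_pos x]

theorem one_le_millsBound_mul_sqrt (x : ℝ) : 1 ≤ millsBound x * √(4 + x ^ 2) := by
  have hs := Real.sq_sqrt (show (0 : ℝ) ≤ 4 + x ^ 2 by positivity)
  have : x * √(4 + x ^ 2) ≤ 2 + x ^ 2 := by
    nlinarith [sq_nonneg (x * √(4 + x ^ 2) - 2 - x ^ 2), Real.sqrt_nonneg (4 + x ^ 2)]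
  unfold millsBound
  nlinarith

theorem hasDerivAt_millsBound (x : ℝ) :
    HasDerivAt millsBound (-millsBound x / √(4 + x ^ 2)) x := by
  have hs : √(4 + x ^ 2) ≠ 0 := (Real.sqrt_pos.2 (by positivity)).ne'
  have h := ((((hasDerivAt_pow 2 x).const_add 4).sqrt (by positivity)).sub
    (hasDerivAt_id x)).div_const 2
  refine h.congr_deriv ?_
  unfold millsBound
  field_simp
  ring

noncomputable def millsGap (x : ℝ) : ℝ := (1 - stdNormalCDF x) - stdNormalPDF x * millsBound x

theorem hasDerivAt_millsGap (x : ℝ) :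
    HasDerivAt millsGap
      (stdNormalPDF x * millsBound x * ((√(4 + x ^ 2))⁻¹ - millsBound x)) x := by
  have hs : √(4 + x ^ 2) ≠ 0 := (Real.sqrt_pos.2 (by positivity)).ne'
  have h := ((hasDerivAt_stdNormalCDF x).const_sub 1).sub
    ((hasDerivAt_stdNormalPDF x).mul (hasDerivAt_millsBound x))
  refine h.congr_deriv ?_
  field_simp
  linear_combination stdNormalPDF x * √(4 + x ^ 2) * millsBound_sq_add_mul x

theorem antitone_millsGap : Antitone millsGap := by
  refine antitone_of_hasDerivAt_nonpos hasDerivAt_millsGap fun x ↦ ?_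
  have hs : 0 < √(4 + x ^ 2) := Real.sqrt_pos.2 (by positivity)
  have hinv : (√(4 + x ^ 2))⁻¹ ≤ millsBound x := by
    rw [inv_le_iff_one_le_mul₀ hs]
    exact one_le_millsBound_mul_sqrt x
  exact mul_nonpos_of_nonneg_of_nonpos
    (mul_nonneg (stdNormalPDF_pos x).le (millsBound_pos x).le) (sub_nonpos.2 hinv)

theorem tendsto_millsGap_atTop : Tendsto millsGap atTop (𝓝 0) := by
  have hprod : Tendsto (fun x ↦ stdNormalPDF x * millsBound x) atTop (𝓝 0) := by
    refine squeeze_zero' (Eventually.of_forall fun x ↦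
      mul_nonneg (stdNormalPDF_pos x).le (millsBound_pos x).le) ?_ tendsto_stdNormalPDF_atTop
    filter_upwards [eventually_ge_atTop 0] with x hx
    exact mul_le_of_le_one_right (stdNormalPDF_pos x).le (millsBound_le_one hx)
  have h := (tendsto_stdNormalCDF_atTop.const_sub 1).sub hprod
  rwa [sub_self, sub_zero] at h

theorem stdNormalPDF_mul_millsBound_le (x : ℝ) :
    stdNormalPDF x * millsBound x ≤ 1 - stdNormalCDF x := by
  have := antitone_millsGap.le_of_tendsto tendsto_millsGap_atTop x
  unfold millsGap at this
  linarith

theorem two_div_sqrt_four_add_sq_sub (x : ℝ) :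
    2 / (√(4 + x ^ 2) - x) = (√(4 + x ^ 2) + x) / 2 := by
  have hs := Real.sq_sqrt (show (0 : ℝ) ≤ 4 + x ^ 2 by positivity)
  rw [div_eq_div_iff (sub_pos.2 (lt_sqrt_four_add_sq x)).ne' two_ne_zero]
  linear_combination -hs

/-- **Birnbaum's inequality (Mills ratio bound).** For all `z ≥ 0`,
`φ(z)/(1 - Φ(z)) ≤ 2/(√(4+z²) - z) = (√(4+z²) + z)/2 ≤ 1 + z`. -/
theorem stmt2 (z : ℝ) (hz : 0 ≤ z) :
    stdNormalPDF z / (1 - stdNormalCDF z) ≤ 2 / (Real.sqrt (4 + z ^ 2) - z) ∧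
    2 / (Real.sqrt (4 + z ^ 2) - z) = (Real.sqrt (4 + z ^ 2) + z) / 2 ∧
    (Real.sqrt (4 + z ^ 2) + z) / 2 ≤ 1 + z := by
  have hmills := stdNormalPDF_mul_millsBound_le z
  have hgap : 0 < √(4 + z ^ 2) - z := sub_pos.2 (lt_sqrt_four_add_sq z)
  have htail : 0 < 1 - stdNormalCDF z :=
    (mul_pos (stdNormalPDF_pos z) (millsBound_pos z)).trans_le hmills
  refine ⟨?_, two_div_sqrt_four_add_sq_sub z, ?_⟩
  · rw [div_le_div_iff₀ htail hgap]
    unfold millsBound at hmills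
    linarith
  · have : √(4 + z ^ 2) ≤ 2 + z := Real.sqrt_le_iff.2 ⟨by linarith, by nlinarith⟩
    linarith
end

section
/- Let M_t = ∫_0^t Γ̄_s dB̃_s be a continuous local martingale in ℝ^d where B̃ is a standard d-dimensional Brownian motion and Γ̄_s are symmetric positive definite adapted matrices, and let Z = ∫_0^ε Σ(t)^{1/2} U_t dB̃_t where Σ(t) = E[Γ_t²] is deterministic positive definite and U_t := (Σ(t)^{-1/2} Γ̄_t² Σ(t)^{-1/2})^{1/2} Σ(t)^{1/2} Γ̄_t^{-1}. Then U_t U_tᵀ = U_tᵀ U_t = I_d, Σ(t)^{1/2} U_t Γ̄_t = Σ(t) # Γ̄_t², and Z is a centered Gaussian vector with covariance ∫_0^ε Σ(t) dt. -/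
open Matrix

/-!
Since `C`, `R`, `G` are symmetric, `Uᵀ U = G⁻¹ R C² R G⁻¹`, and `C² = R⁻¹ G² R⁻¹` collapses this
to `G⁻¹ G² G⁻¹ = 1`; for square matrices a left inverse is a right inverse, so `U Uᵀ = 1` too.
-/

namespace Matrix

variable {n α : Type*} [Fintype n] [DecidableEq n] [CommRing α]

theorem transpose_mul_self_eq_one_of_mul_self_eq {R G C : Matrix n n α}
    (hR : R.IsSymm) (hG : G.IsSymm) (hC : C.IsSymm)
    (hRu : IsUnit R.det) (hGu : IsUnit G.det) (hC2 : C * C = R⁻¹ * (G * G) * R⁻¹) :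
    (C * R * G⁻¹)ᵀ * (C * R * G⁻¹) = 1 := by
  have hUt : (C * R * G⁻¹)ᵀ = G⁻¹ * R * C := by
    rw [transpose_mul, transpose_mul, transpose_nonsing_inv, hR.eq, hG.eq, hC.eq, Matrix.mul_assoc]
  calc (C * R * G⁻¹)ᵀ * (C * R * G⁻¹)
      = G⁻¹ * R * (C * C) * R * G⁻¹ := by rw [hUt]; simp only [Matrix.mul_assoc]
    _ = G⁻¹ * (R * R⁻¹) * (G * G) * (R⁻¹ * R) * G⁻¹ := by
        rw [hC2]; simp only [Matrix.mul_assoc]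
    _ = (G⁻¹ * G) * (G * G⁻¹) := by
        simp only [mul_nonsing_inv R hRu, nonsing_inv_mul R hRu, Matrix.mul_one,
          Matrix.mul_assoc]
    _ = 1 := by rw [nonsing_inv_mul G hGu, mul_nonsing_inv G hGu, Matrix.one_mul]

end Matrix

theorem stmt19_general (d : ℕ) (G R C : Matrix (Fin d) (Fin d) ℝ)
    (hG : G.PosDef) (hR : R.PosDef)
    (hC : C.PosDef) (hC2 : C * C = R⁻¹ * (G * G) * R⁻¹) :
    (C * R * G⁻¹) * (C * R * G⁻¹)ᵀ = 1 ∧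
    (C * R * G⁻¹)ᵀ * (C * R * G⁻¹) = 1 ∧
    R * (C * R * G⁻¹) * G = R * C * R := by
  have hGu : IsUnit G.det := (isUnit_iff_isUnit_det G).mp hG.isUnit
  have hUtU : (C * R * G⁻¹)ᵀ * (C * R * G⁻¹) = 1 :=
    transpose_mul_self_eq_one_of_mul_self_eq (isHermitian_iff_isSymm.mp hR.isHermitian)
      (isHermitian_iff_isSymm.mp hG.isHermitian) (isHermitian_iff_isSymm.mp hC.isHermitian)
      ((isUnit_iff_isUnit_det R).mp hR.isUnit) hGu hC2
  refine ⟨mul_eq_one_comm.mp hUtU, hUtU, ?_⟩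
  rw [Matrix.mul_assoc R, nonsing_inv_mul_cancel_right G _ hGu, Matrix.mul_assoc]

/-- **Orthogonality of the martingale-embedding rotation (algebraic core).**
Let `S` (deterministic, `S = E[Γ_t²]`) and `G` (the value `Γ̄_t`) be positive definite
`d × d` matrices, `R` the positive definite square root of `S` (so `S^{1/2} = R`), and `C`
the positive definite square root of `S^{-1/2} G² S^{-1/2}`. Then
`U := (S^{-1/2} G² S^{-1/2})^{1/2} S^{1/2} G⁻¹ = C R G⁻¹` satisfies
`U Uᵀ = Uᵀ U = I` and `S^{1/2} U G = R C R = S # G²`, the matrix geometric mean of `S`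
and `G²`. -/
theorem stmt19 (d : ℕ) (S G R C : Matrix (Fin d) (Fin d) ℝ)
    (hS : S.PosDef) (hG : G.PosDef)
    (hR : R.PosDef) (hR2 : R * R = S)
    (hC : C.PosDef) (hC2 : C * C = R⁻¹ * (G * G) * R⁻¹) :
    (C * R * G⁻¹) * (C * R * G⁻¹)ᵀ = 1 ∧
    (C * R * G⁻¹)ᵀ * (C * R * G⁻¹) = 1 ∧
    R * (C * R * G⁻¹) * G = R * C * R :=
  stmt19_general d G R C hG hR hC hC2
end
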